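/- arXiv:1411.7816 — 4 statements merged into one kernel-verified Lean document; each statement's English description precedes it below -/
import Mathlib

section
/- Let ω satisfy ω² = ω − 1, identify x+yω ∈ ℤ[ω] with (x,y) ∈ ℤ², and let N(x+yω) = x² + xy + y². Then for all integers a, b: if a+bω ≡ −ω (mod 7+9ω) in ℤ[ω] (i.e., there exist integers u, v with a = 7u − 9v and b + 1 = 9u + 16v), then a² + ab + b² ≥ 1, and a² + ab + b² = 1 if and only if (a,b) = (0, −1). In other words, −ω is the unique representative of minimal norm of its residue class modulo 7+9ω. -/
/-!
If `a + bω ≡ -ω (mod 7 + 9ω)` and `N(a + bω) ≤ 1`, then `|a|, |b| ≤ 1`. Solving the congruence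
`a = 7u - 9v`, `b + 1 = 9u + 16v` by Cramer's rule gives `193 u = 16a + 9(b + 1)` and
`193 v = 7(b + 1) - 9a`, whose right-hand sides are then too small to be nonzero multiples of `193`;
hence `u = v = 0`, i.e. `a + bω = -ω`.
-/

theorem four_mul_norm_eq (a b : ℤ) :
    4 * (a ^ 2 + a * b + b ^ 2) = (2 * a + b) ^ 2 + 3 * b ^ 2 := by
  ring

theorem abs_le_one_of_norm_le_one {a b : ℤ} (h : a ^ 2 + a * b + b ^ 2 ≤ 1) : |b| ≤ 1 := by
  have hb : b ^ 2 ≤ 1 := by nlinarith [four_mul_norm_eq a b, sq_nonneg (2 * a + b)]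
  exact (sq_le_one_iff_abs_le_one b).mp hb

theorem eq_neg_omega_of_congr_of_abs_le_one {a b u v : ℤ}
    (ha : a = 7 * u - 9 * v) (hb : b + 1 = 9 * u + 16 * v) (ha₁ : |a| ≤ 1) (hb₁ : |b| ≤ 1) :
    a = 0 ∧ b = -1 := by
  have hu : 193 * u = 16 * a + 9 * (b + 1) := by linear_combination -16 * ha - 9 * hb
  have hv : 193 * v = 7 * (b + 1) - 9 * a := by linear_combination 9 * ha - 7 * hb
  rw [abs_le] at ha₁ hb₁
  obtain rfl : u = 0 := by omega
  obtain rfl : v = 0 := by omega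
  omega

theorem eq_neg_omega_of_congr_of_norm_le_one {a b u v : ℤ}
    (ha : a = 7 * u - 9 * v) (hb : b + 1 = 9 * u + 16 * v) (h : a ^ 2 + a * b + b ^ 2 ≤ 1) :
    a = 0 ∧ b = -1 := by
  have ha₁ : |a| ≤ 1 := abs_le_one_of_norm_le_one (b := a) (a := b) (by linarith)
  exact eq_neg_omega_of_congr_of_abs_le_one ha hb ha₁ (abs_le_one_of_norm_le_one h)

/-- `-ω` is the unique representative of minimal norm of its residue class
modulo `7+9ω` in `ℤ[ω]`, where `ω² = ω - 1` and `N(x+yω) = x² + xy + y²`. -/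
theorem stmt_2 :
    ∀ a b : ℤ, (∃ u v : ℤ, a = 7 * u - 9 * v ∧ b + 1 = 9 * u + 16 * v) →
      a ^ 2 + a * b + b ^ 2 ≥ 1 ∧
        (a ^ 2 + a * b + b ^ 2 = 1 ↔ a = 0 ∧ b = -1) := by
  rintro a b ⟨u, v, ha, hb⟩
  refine ⟨?_, fun h => eq_neg_omega_of_congr_of_norm_le_one ha hb h.le, ?_⟩
  · by_contra! h
    obtain ⟨rfl, rfl⟩ := eq_neg_omega_of_congr_of_norm_le_one ha hb h.le
    norm_num at h
  · rintro ⟨rfl, rfl⟩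
    norm_num
end

section
/- There is no function d : (ℤ×ℤ) → (ℤ×ℤ) → ℕ with the following three properties: (i) d(p, q) depends only on the residue class of p − q modulo 7+9ω (that is, if p − q ≡ p' − q' (mod 7+9ω) then d(p,q) = d(p',q')); (ii) whenever (x,y) is a representative of the class of p − q modulo 7+9ω of minimal norm x² + xy + y², one has d(p,q) = |x| + |y|; (iii) d satisfies the triangle inequality d(p,r) ≤ d(p,q) + d(q,r) for all p, q, r. Indeed, taking p = (−6,7) (i.e., −6+7ω), q = (1,0), r = (1,−1) (i.e., 1−ω), one gets d(p,q) = |−7|+|7| = 14 while d(p,r) + d(r,q) = (|2|+|−8|) + (|0|+|−1|) = 10 + 1 = 11 < 14. Hence the Mannheim distance d_M defined in the corrected article fails the triangle inequality and is not a metric. -/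
/-- Congruence modulo `7+9ω` in `ℤ[ω] ≅ ℤ × ℤ`: `(a,b) ≡ (c,d)` iff their
difference is a `ℤ[ω]`-multiple of `7+9ω`, i.e. of the form `(7u-9v, 9u+16v)`. -/
def congMod193 (p q : ℤ × ℤ) : Prop :=
  ∃ u v : ℤ, p.1 - q.1 = 7 * u - 9 * v ∧ p.2 - q.2 = 9 * u + 16 * v

/-- The norm `N(x+yω) = x² + xy + y²`. -/
def normZω (p : ℤ × ℤ) : ℤ := p.1 ^ 2 + p.1 * p.2 + p.2 ^ 2

/-!
Multiplying by the conjugate `16 - 9ω` of `π = 7 + 9ω` turns a class modulo `π` into a coset of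
`193 ℤ²` and multiplies norms by `N(π) = 193`. So `N(δ) ≤ N(δ')` for all `δ' ≡ δ (mod π)` as soon
as `193 N(δ)` is at most the norm of every point of the coset `(16 - 9ω) δ + 193 ℤ²`. Since
`4 N(A + Bω) ≥ 3 max(A², B²)`, only the four points of the coset with both coordinates in
`(-193, 193)` have to be inspected, which is a finite computation for each of the three
representatives `-7 + 7ω`, `2 - 8ω`, `-ω`.
-/

def mulZω (p q : ℤ × ℤ) : ℤ × ℤ := (p.1 * q.1 - p.2 * q.2, p.2 * q.1 + (p.1 + p.2) * q.2)

theorem normZω_mulZω (p q : ℤ × ℤ) : normZω (mulZω p q) = normZω p * normZω q := by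
  simp only [normZω, mulZω]
  ring

theorem three_mul_sq_fst_le_four_mul_normZω (A B : ℤ) : 3 * A ^ 2 ≤ 4 * normZω (A, B) := by
  have := sq_nonneg (A + 2 * B)
  simp only [normZω]
  nlinarith

theorem three_mul_sq_snd_le_four_mul_normZω (A B : ℤ) : 3 * B ^ 2 ≤ 4 * normZω (A, B) := by
  have := sq_nonneg (2 * A + B)
  simp only [normZω]
  nlinarith

theorem congMod193_equivalence : Equivalence congMod193 where
  refl _ := ⟨0, 0, by simp, by simp⟩
  symm := by
    rintro p q ⟨u, v, h₁, h₂⟩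
    exact ⟨-u, -v, by linarith, by linarith⟩
  trans := by
    rintro p q r ⟨u, v, h₁, h₂⟩ ⟨u', v', h₁', h₂'⟩
    exact ⟨u + u', v + v', by linarith, by linarith⟩

theorem congMod193.modEq_mulZω_conj {p q : ℤ × ℤ} (h : congMod193 p q) :
    (mulZω (16, -9) p).1 ≡ (mulZω (16, -9) q).1 [ZMOD 193] ∧
      (mulZω (16, -9) p).2 ≡ (mulZω (16, -9) q).2 [ZMOD 193] := by
  obtain ⟨u, v, h₁, h₂⟩ := h
  simp only [mulZω, Int.modEq_iff_dvd]
  exact ⟨⟨-u, by linear_combination -16 * h₁ - 9 * h₂⟩, ⟨-v, by linear_combination 9 * h₁ - 7 * h₂⟩⟩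

theorem Int.eq_emod_or_eq_emod_sub_or_le_abs {n : ℤ} (hn : 0 < n) (A : ℤ) :
    A = A % n ∨ A = A % n - n ∨ n ≤ |A| := by
  have hA := Int.emod_add_mul_ediv A n
  have := Int.emod_nonneg A hn.ne'
  have := Int.emod_lt_of_pos A hn
  obtain hq | hq | hq | hq : A / n = 0 ∨ A / n = -1 ∨ 1 ≤ A / n ∨ A / n ≤ -2 := by omega
  · rw [hq] at hA
    left; linarith
  · rw [hq] at hA
    right; left; linarith
  · have : n ≤ n * (A / n) := by nlinarith
    exact Or.inr (Or.inr (le_abs.mpr (Or.inl (by linarith))))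
  · have : n * (A / n) ≤ -2 * n := by nlinarith
    exact Or.inr (Or.inr (le_abs.mpr (Or.inr (by linarith))))

theorem le_normZω_of_emod {n M A B : ℤ} (hn : 0 < n) (hM : 4 * M ≤ 3 * n ^ 2)
    (hcorners : ∀ a ∈ ({A % n, A % n - n} : Finset ℤ), ∀ b ∈ ({B % n, B % n - n} : Finset ℤ),
      M ≤ normZω (a, b)) :
    M ≤ normZω (A, B) := by
  have sq_le_of_le_abs {X : ℤ} (hX : n ≤ |X|) : n ^ 2 ≤ X ^ 2 :=
    sq_abs X ▸ pow_le_pow_left₀ hn.le hX 2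
  obtain hA | hA | hA := Int.eq_emod_or_eq_emod_sub_or_le_abs hn A
  · obtain hB | hB | hB := Int.eq_emod_or_eq_emod_sub_or_le_abs hn B
    · rw [hA, hB]; exact hcorners _ (by simp) _ (by simp)
    · rw [hA, hB]; exact hcorners _ (by simp) _ (by simp)
    · linarith [sq_le_of_le_abs hB, three_mul_sq_snd_le_four_mul_normZω A B]
  · obtain hB | hB | hB := Int.eq_emod_or_eq_emod_sub_or_le_abs hn B
    · rw [hA, hB]; exact hcorners _ (by simp) _ (by simp)
    · rw [hA, hB]; exact hcorners _ (by simp) _ (by simp)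
    · linarith [sq_le_of_le_abs hB, three_mul_sq_snd_le_four_mul_normZω A B]
  · linarith [sq_le_of_le_abs hA, three_mul_sq_fst_le_four_mul_normZω A B]

def IsMinNormRep (δ : ℤ × ℤ) : Prop := ∀ δ', congMod193 δ δ' → normZω δ ≤ normZω δ'

theorem IsMinNormRep.le_normZω {δ ε : ℤ × ℤ} (hε : IsMinNormRep ε) (hδε : congMod193 δ ε)
    (x y : ℤ) (hδ : congMod193 δ (x, y)) : normZω ε ≤ normZω (x, y) :=
  hε _ (congMod193_equivalence.trans (congMod193_equivalence.symm hδε) hδ)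

theorem isMinNormRep_of_le {δ : ℤ × ℤ} (hδ : 4 * normZω δ ≤ 3 * 193)
    (hcorners : ∀ a ∈ ({(mulZω (16, -9) δ).1 % 193, (mulZω (16, -9) δ).1 % 193 - 193} : Finset ℤ),
      ∀ b ∈ ({(mulZω (16, -9) δ).2 % 193, (mulZω (16, -9) δ).2 % 193 - 193} : Finset ℤ),
      193 * normZω δ ≤ normZω (a, b)) :
    IsMinNormRep δ := by
  intro δ' hδδ'
  obtain ⟨h₁, h₂⟩ := hδδ'.modEq_mulZω_conj
  have hnorm : normZω (mulZω (16, -9) δ') = 193 * normZω δ' := by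
    rw [normZω_mulZω]; norm_num [normZω]
  have := le_normZω_of_emod (n := 193) (A := (mulZω (16, -9) δ').1) (B := (mulZω (16, -9) δ').2)
    (by norm_num) (by linarith) (h₁ ▸ h₂ ▸ hcorners)
  linarith

/-- There is no function `d : ℤ[ω] → ℤ[ω] → ℕ` that (i) depends only on the residue
class of the difference modulo `7+9ω`, (ii) equals the Mannheim weight `|x|+|y|` of any
minimal-norm representative `(x,y)` of that class, and (iii) satisfies the triangle
inequality. Hence the Mannheim distance `d_M` of the article is not a metric. -/
theorem stmt_3 :
    ¬ ∃ d : (ℤ × ℤ) → (ℤ × ℤ) → ℕ,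
      (∀ p q p' q' : ℤ × ℤ, congMod193 (p - q) (p' - q') → d p q = d p' q') ∧
      (∀ p q : ℤ × ℤ, ∀ x y : ℤ,
        congMod193 (p - q) (x, y) →
        (∀ x' y' : ℤ, congMod193 (p - q) (x', y') → normZω (x, y) ≤ normZω (x', y')) →
        d p q = x.natAbs + y.natAbs) ∧
      (∀ p q r : ℤ × ℤ, d p r ≤ d p q + d q r) := by
  rintro ⟨d, -, hweight, htriangle⟩
  have hmin₁ : IsMinNormRep (-7, 7) := isMinNormRep_of_le (by decide) (by decide)
  have hmin₂ : IsMinNormRep (2, -8) := isMinNormRep_of_le (by decide) (by decide)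
  have hmin₃ : IsMinNormRep (0, -1) := isMinNormRep_of_le (by decide) (by decide)
  have hc₁ : congMod193 ((-6, 7) - (1, 0)) (-7, 7) := ⟨0, 0, rfl, rfl⟩
  have hc₂ : congMod193 ((-6, 7) - (1, -1)) (2, -8) := ⟨0, 1, rfl, rfl⟩
  have hc₃ : congMod193 ((1, -1) - (1, 0)) (0, -1) := ⟨0, 0, rfl, rfl⟩
  have h₁ : d (-6, 7) (1, 0) = 14 := hweight _ _ _ _ hc₁ (hmin₁.le_normZω hc₁)
  have h₂ : d (-6, 7) (1, -1) = 10 := hweight _ _ _ _ hc₂ (hmin₂.le_normZω hc₂)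
  have h₃ : d (1, -1) (1, 0) = 1 := hweight _ _ _ _ hc₃ (hmin₃.le_normZω hc₃)
  have := htriangle (-6, 7) (1, -1) (1, 0)
  omega
end

section
/- (Single error correction, Theorem 1.) Let n ≥ 1, let F be a finite field with exactly 6n+1 elements, and let β be a generator of Fˣ. Call a vector e : Fin n → F an admissible error pattern if either e = 0, or there is exactly one index i with e(i) ≠ 0 and at that index e(i)⁶ = 1. If e and e' are admissible error patterns with the same syndrome, i.e., Σ_{i<n} e(i)·βⁱ = Σ_{i<n} e'(i)·βⁱ, then e = e'. Consequently, the code C = {c : Fin n → F | Σ_{i<n} c(i)·βⁱ = 0} corrects every error pattern of the form e(x) = e_i xⁱ with Mannheim weight W_m(e_i) = 1. -/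
/-!
Since `β` has order `6n`, the element `βⁿ` is a primitive sixth root of unity, so every
sixth root of unity is `β^(nk)` with `k < 6`. A nonzero admissible pattern `u·xⁱ` therefore
has syndrome `β^(nk + i)` with `nk + i < 6n`, and this exponent determines both `k` and `i`.
-/

/-- An admissible error pattern: zero, or exactly one nonzero entry,
that entry being a sixth root of unity (an element of Mannheim weight 1). -/
def AdmissibleError {F : Type*} [Field F] {n : ℕ} (e : Fin n → F) : Prop :=
  e = 0 ∨ ∃ i : Fin n, e i ^ 6 = 1 ∧ ∀ j : Fin n, j ≠ i → e j = 0

theorem Nat.eq_and_eq_of_mul_add_eq_mul_add {n k k' i j : ℕ} (hi : i < n) (hj : j < n)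
    (h : n * k + i = n * k' + j) : k = k' ∧ i = j := by
  have hn : 0 < n := by omega
  have hk : k = k' := by
    simpa [Nat.mul_add_div hn, Nat.div_eq_of_lt hi, Nat.div_eq_of_lt hj] using
      congrArg (· / n) h
  subst hk
  exact ⟨rfl, by omega⟩

namespace IsPrimitiveRoot

variable {R : Type*} [CommRing R] [IsDomain R] {β : R} {m n : ℕ} [NeZero m]

theorem exists_lt_pow_mul_eq_of_pow_eq_one (hβ : IsPrimitiveRoot β (m * n)) (hn : 0 < n)
    {u : R} (hu : u ^ m = 1) : ∃ k < m, β ^ (n * k) = u := by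
  obtain ⟨k, hk, rfl⟩ :=
    (hβ.pow (Nat.mul_pos (NeZero.pos m) hn) (mul_comm m n)).eq_pow_of_pow_eq_one hu
  exact ⟨k, hk, pow_mul β n k⟩

theorem eq_and_eq_of_mul_pow_eq_mul_pow (hβ : IsPrimitiveRoot β (m * n)) {u u' : R}
    (hu : u ^ m = 1) (hu' : u' ^ m = 1) {i j : ℕ} (hi : i < n) (hj : j < n)
    (h : u * β ^ i = u' * β ^ j) : u = u' ∧ i = j := by
  have hn : 0 < n := by omega
  obtain ⟨k, hk, rfl⟩ := hβ.exists_lt_pow_mul_eq_of_pow_eq_one hn hu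
  obtain ⟨k', hk', rfl⟩ := hβ.exists_lt_pow_mul_eq_of_pow_eq_one hn hu'
  have hlt : ∀ {l a : ℕ}, l < m → a < n → n * l + a < m * n := fun hl ha => by nlinarith
  rw [← pow_add, ← pow_add] at h
  obtain ⟨rfl, rfl⟩ :=
    Nat.eq_and_eq_of_mul_add_eq_mul_add hi hj (hβ.pow_inj (hlt hk hi) (hlt hk' hj) h)
  exact ⟨rfl, rfl⟩

end IsPrimitiveRoot

theorem AdmissibleError.eq_zero_or_eq_single {F : Type*} [Field F] {n : ℕ} {e : Fin n → F}
    (he : AdmissibleError e) : e = 0 ∨ ∃ i u, u ^ 6 = 1 ∧ e = Pi.single i u := by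
  rcases he with he | ⟨i, hu, hzero⟩
  · exact Or.inl he
  · refine Or.inr ⟨i, e i, hu, funext fun j => ?_⟩
    by_cases hj : j = i
    · subst hj; simp
    · simp [hj, hzero j hj]

theorem sum_single_mul {ι R : Type*} [Fintype ι] [DecidableEq ι] [NonUnitalNonAssocSemiring R]
    (i : ι) (u : R) (w : ι → R) : ∑ k, (Pi.single i u : ι → R) k * w k = u * w i := by
  simp [Pi.single_apply]

theorem stmt_7_general {F : Type*} [Field F] (n : ℕ) (β : F) (hβ : orderOf β = 6 * n)
    (e e' : Fin n → F) (he : AdmissibleError e) (he' : AdmissibleError e')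
    (hsyn : ∑ i : Fin n, e i * β ^ (i : ℕ) = ∑ i : Fin n, e' i * β ^ (i : ℕ)) :
    e = e' := by
  have hβ' : IsPrimitiveRoot β (6 * n) := hβ ▸ IsPrimitiveRoot.orderOf β
  have syndrome_ne_zero : ∀ (i : Fin n) (u : F), u ^ 6 = 1 → u * β ^ (i : ℕ) ≠ 0 :=
    fun i u hu => ((IsUnit.of_pow_eq_one hu (by norm_num)).mul
      ((hβ'.isUnit (by have := i.pos; omega)).pow _)).ne_zero
  rcases he.eq_zero_or_eq_single with rfl | ⟨i, u, hu, rfl⟩ <;>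
    rcases he'.eq_zero_or_eq_single with rfl | ⟨j, u', hu', rfl⟩ <;>
    simp only [sum_single_mul, Pi.zero_apply, zero_mul, Finset.sum_const_zero] at hsyn
  · rfl
  · exact absurd hsyn.symm (syndrome_ne_zero j u' hu')
  · exact absurd hsyn (syndrome_ne_zero i u hu)
  · obtain ⟨rfl, hij⟩ := hβ'.eq_and_eq_of_mul_pow_eq_mul_pow hu hu' i.isLt j.isLt hsyn
    rw [Fin.ext hij]

/-- Theorem 1: the code with parity-check matrix `(1, β, β², …, β^{n-1})` over a field
with `6n+1` elements corrects every single error of Mannheim weight 1: two admissible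
error patterns with the same syndrome coincide. -/
theorem stmt_7 {F : Type*} [Field F] [Fintype F] (n : ℕ) (hn : 1 ≤ n)
    (hF : Fintype.card F = 6 * n + 1) (β : F) (hβ : orderOf β = 6 * n)
    (e e' : Fin n → F) (he : AdmissibleError e) (he' : AdmissibleError e')
    (hsyn : ∑ i : Fin n, e i * β ^ (i : ℕ) = ∑ i : Fin n, e' i * β ^ (i : ℕ)) :
    e = e' :=
  stmt_7_general n β hβ e e' he he' hsyn
end

section
/- (Perfect 1-error-correcting codes.) Let n ≥ 1, let F be a finite field with exactly 6n+1 elements, let β be a generator of Fˣ, and let C = {c : Fin n → F | Σ_{i<n} c(i)·βⁱ = 0}. Then every vector v : Fin n → F can be written in exactly one way as v = c + e, where c ∈ C and e is an admissible error pattern (e = 0, or e has exactly one nonzero entry and that entry is a sixth root of unity). In other words, the balls of Mannheim radius 1 centered at the codewords of C partition Fⁿ, so C is a perfect 1-error-correcting code with respect to the Mannheim metric. -/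
theorem exists_pow_eq_one_and_pow_eq_mul_pow_mod {M : Type*} [Monoid M] {β : M} {k n : ℕ}
    (hβ : orderOf β = k * n) (m : ℕ) : ∃ ζ : M, ζ ^ k = 1 ∧ β ^ m = ζ * β ^ (m % n) := by
  refine ⟨β ^ (m / n * n), ?_, ?_⟩
  · rw [← pow_mul, orderOf_dvd_iff_pow_eq_one.mp]
    exact hβ ▸ ⟨m / n, by ring⟩
  · rw [← pow_add, Nat.div_add_mod']

theorem eq_and_eq_of_mul_pow_eq_mul_pow {M : Type*} [CommMonoid M] {β : M} {k n : ℕ}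
    (hk : 0 < k) (hβ : orderOf β = k * n) {ζ ζ' : M} (hζ : ζ ^ k = 1) (hζ' : ζ' ^ k = 1) {i i' : ℕ}
    (hi : i < n) (hi' : i' < n) (h : ζ * β ^ i = ζ' * β ^ i') : i = i' ∧ ζ = ζ' := by
  wlog hle : i' ≤ i generalizing ζ ζ' i i'
  · obtain ⟨rfl, rfl⟩ := this hζ' hζ hi' hi h.symm (by omega)
    exact ⟨rfl, rfl⟩
  have hβ_fin : IsOfFinOrder β :=
    isOfFinOrder_iff_pow_eq_one.mpr ⟨k * n, Nat.mul_pos hk (by omega), hβ ▸ pow_orderOf_eq_one β⟩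
  have hunit : IsUnit (β ^ i') := hβ_fin.isUnit.pow _
  have hζ'_eq : ζ * β ^ (i - i') = ζ' := by
    rw [← hunit.mul_left_inj, mul_assoc, ← pow_add, Nat.sub_add_cancel hle, h]
  have hdvd : k * n ∣ k * (i - i') := by
    rw [← hβ, orderOf_dvd_iff_pow_eq_one, mul_comm, pow_mul]
    calc (β ^ (i - i')) ^ k = ζ ^ k * (β ^ (i - i')) ^ k := by rw [hζ, one_mul]
      _ = 1 := by rw [← mul_pow, hζ'_eq, hζ']
  have hii' : i - i' = 0 :=
    Nat.eq_zero_of_dvd_of_lt (Nat.dvd_of_mul_dvd_mul_left hk hdvd) (by omega)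
  refine ⟨by omega, ?_⟩
  rwa [hii', pow_zero, mul_one] at hζ'_eq

theorem FiniteField.exists_pow_eq_of_orderOf_eq {F : Type*} [Field F] [Fintype F] {β : F}
    (hβ : orderOf β = Fintype.card F - 1) {s : F} (hs : s ≠ 0) : ∃ m : ℕ, β ^ m = s := by
  have : NeZero (Fintype.card F - 1) := ⟨by have := Fintype.one_lt_card (α := F); omega⟩
  obtain ⟨m, -, hm⟩ := (hβ ▸ IsPrimitiveRoot.orderOf β).eq_pow_of_pow_eq_one
    (FiniteField.pow_card_sub_one_eq_one s hs)
  exact ⟨m, hm⟩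

theorem existsUnique_add_of_bijOn {M N : Type*} [AddGroup M] [AddGroup N] (S : M →+ N)
    {E : Set M} (hE : Set.BijOn S E Set.univ) (v : M) :
    ∃! p : M × M, S p.1 = 0 ∧ p.2 ∈ E ∧ v = p.1 + p.2 := by
  obtain ⟨e, he, hSe⟩ := hE.surjOn (Set.mem_univ (S v))
  refine ⟨(v - e, e), ⟨by simp [hSe], he, by simp⟩, ?_⟩
  rintro ⟨c, e'⟩ ⟨hc, he', rfl⟩
  have : e' = e := hE.injOn he' he (by simp [hSe, hc])
  subst this
  simp

section Syndrome

variable {F : Type*} [Field F] {n : ℕ}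

def syndrome (β : F) : (Fin n → F) →+ F where
  toFun v := ∑ i, v i * β ^ (i : ℕ)
  map_zero' := by simp
  map_add' v w := by simp [add_mul, Finset.sum_add_distrib]

theorem syndrome_single (β : F) (i : Fin n) (ζ : F) :
    syndrome β (Pi.single i ζ) = ζ * β ^ (i : ℕ) := by
  simp [syndrome, Pi.single_apply]

theorem admissibleError_iff {e : Fin n → F} :
    AdmissibleError e ↔ e = 0 ∨ ∃ i ζ, ζ ^ 6 = 1 ∧ e = Pi.single i ζ := by
  refine or_congr_right ⟨fun ⟨i, hi, hj⟩ ↦ ⟨i, e i, hi, ?_⟩, fun ⟨i, ζ, hζ, he⟩ ↦ ⟨i, ?_, ?_⟩⟩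
  · ext j
    by_cases hji : j = i <;> simp_all
  · simpa [he] using hζ
  · intro j hji
    simp [he, hji]

theorem bijOn_syndrome_setOf_admissibleError [Fintype F] {β : F}
    (hF : Fintype.card F = 6 * n + 1) (hβ : orderOf β = 6 * n) :
    Set.BijOn (syndrome β) {e : Fin n → F | AdmissibleError e} Set.univ := by
  have hn : 0 < n := by have := Fintype.one_lt_card (α := F); omega
  have hβ0 : β ≠ 0 := by
    rintro rfl
    simp at hβ
    omega
  have hsingle_ne : ∀ (i : Fin n) (ζ : F), ζ ^ 6 = 1 → syndrome β (Pi.single i ζ) ≠ 0 := by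
    intro i ζ hζ
    rw [syndrome_single]
    exact mul_ne_zero (by rintro rfl; simp at hζ) (pow_ne_zero _ hβ0)
  refine ⟨Set.mapsTo_univ _ _, ?_, ?_⟩
  · simp only [Set.InjOn, Set.mem_ofPred_eq, admissibleError_iff]
    rintro _ (rfl | ⟨i, ζ, hζ, rfl⟩) _ (rfl | ⟨i', ζ', hζ', rfl⟩) h
    · rfl
    · exact (hsingle_ne i' ζ' hζ' (h.symm.trans (map_zero _))).elim
    · exact (hsingle_ne i ζ hζ (h.trans (map_zero _))).elim
    · simp only [syndrome_single] at h
      obtain ⟨hii', rfl⟩ :=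
        eq_and_eq_of_mul_pow_eq_mul_pow (by norm_num) hβ hζ hζ' i.2 i'.2 h
      rw [Fin.ext hii']
  · intro s _
    by_cases hs : s = 0
    · exact ⟨0, Or.inl rfl, by simp [hs]⟩
    have hβ' : orderOf β = Fintype.card F - 1 := by omega
    obtain ⟨m, rfl⟩ := FiniteField.exists_pow_eq_of_orderOf_eq hβ' hs
    obtain ⟨ζ, hζ, hm⟩ := exists_pow_eq_one_and_pow_eq_mul_pow_mod hβ m
    refine ⟨Pi.single ⟨m % n, Nat.mod_lt m hn⟩ ζ, ?_, ?_⟩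
    · exact admissibleError_iff.mpr (Or.inr ⟨_, ζ, hζ, rfl⟩)
    · rw [syndrome_single, hm]

end Syndrome

theorem stmt_8_general {F : Type*} [Field F] [Fintype F] (n : ℕ)
    (hF : Fintype.card F = 6 * n + 1) (β : F) (hβ : orderOf β = 6 * n)
    (v : Fin n → F) :
    ∃! p : (Fin n → F) × (Fin n → F),
      (∑ i : Fin n, p.1 i * β ^ (i : ℕ) = 0) ∧ AdmissibleError p.2 ∧ v = p.1 + p.2 :=
  existsUnique_add_of_bijOn (syndrome β) (bijOn_syndrome_setOf_admissibleError hF hβ) v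

/-- The code `C = {c | ∑ c i · βⁱ = 0}` over a field with `6n+1` elements is a perfect
1-error-correcting code for the Mannheim metric: every vector is uniquely a codeword
plus an admissible error pattern. -/
theorem stmt_8 {F : Type*} [Field F] [Fintype F] (n : ℕ) (hn : 1 ≤ n)
    (hF : Fintype.card F = 6 * n + 1) (β : F) (hβ : orderOf β = 6 * n)
    (v : Fin n → F) :
    ∃! p : (Fin n → F) × (Fin n → F),
      (∑ i : Fin n, p.1 i * β ^ (i : ℕ) = 0) ∧ AdmissibleError p.2 ∧ v = p.1 + p.2 :=
  stmt_8_general n hF β hβ v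
end
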